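/- For the bivariate Gaussian copula C^r, the partial derivative of C^r(u,v) with respect to r at r = 0 equals φ(Φ⁻¹(u))·φ(Φ⁻¹(v)). -/

import Mathlib

open MeasureTheory Real

/-- Standard normal density. -/
noncomputable def stdPdf (x : ℝ) : ℝ := (Real.sqrt (2 * Real.pi))⁻¹ * Real.exp (-x ^ 2 / 2)

/-- Standard normal distribution function. -/
noncomputable def stdCdf (x : ℝ) : ℝ := ∫ t in Set.Iic x, stdPdf t

/-- Density of the bivariate standard normal with correlation `r`. -/
noncomputable def bivPdf (r : ℝ) (p : ℝ × ℝ) : ℝ :=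
  (2 * Real.pi * Real.sqrt (1 - r ^ 2))⁻¹ *
    Real.exp (-(p.1 ^ 2 + p.2 ^ 2 - 2 * r * p.1 * p.2) / (2 * (1 - r ^ 2)))

/-- The bivariate Gaussian copula `C^r(u,v) = P[Φ(X) ≤ u, Φ(Y) ≤ v]`. -/
noncomputable def gaussCopula (r : ℝ) (u v : ℝ) : ℝ :=
  ∫ p in {p : ℝ × ℝ | stdCdf p.1 ≤ u ∧ stdCdf p.2 ≤ v}, bivPdf r p

/-!
Because `Φ` is strictly increasing, the copula region `{Φ(p₁) ≤ Φ(x), Φ(p₂) ≤ Φ(y)}` is the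
quadrant `Iic x ×ˢ Iic y`, so `C^r(Φ x, Φ y)` is the integral of the bivariate density over a
fixed set. For `|r| ≤ 1/2` the `r`-derivative of the density is dominated by a multiple of
`exp (-(p₁² + p₂²) / 8)`, so one may differentiate under the integral sign. At `r = 0` this
derivative is `p₁ p₂ φ(p₁) φ(p₂)`, whose integral over the quadrant factors, and
`∫_{-∞}^x t φ(t) dt = -φ(x)`.
-/

open Filter Set Topology

lemma stdPdf_pos (x : ℝ) : 0 < stdPdf x := by unfold stdPdf; positivity

lemma continuous_stdPdf : Continuous stdPdf := by unfold stdPdf; fun_prop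

lemma stdPdf_eq_mul_exp : stdPdf = fun x => (√(2 * π))⁻¹ * exp (-(1 / 2) * x ^ 2) := by
  ext x; rw [stdPdf]; ring_nf

lemma integrable_stdPdf : Integrable stdPdf := by
  rw [stdPdf_eq_mul_exp]
  exact (integrable_exp_neg_mul_sq (by norm_num)).const_mul _

lemma integrable_mul_stdPdf : Integrable fun t => t * stdPdf t := by
  simp_rw [stdPdf_eq_mul_exp, mul_left_comm _ (√(2 * π))⁻¹]
  exact (integrable_mul_exp_neg_mul_sq (by norm_num)).const_mul _

lemma stdCdf_strictMono : StrictMono stdCdf := fun a b hab => by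
  have hpos : 0 < ∫ t in a..b, stdPdf t :=
    intervalIntegral.intervalIntegral_pos_of_pos (continuous_stdPdf.intervalIntegrable a b)
      stdPdf_pos hab
  rw [← intervalIntegral.integral_Iic_sub_Iic integrable_stdPdf.integrableOn
    integrable_stdPdf.integrableOn] at hpos
  exact sub_pos.mp hpos

lemma hasDerivAt_stdPdf (t : ℝ) : HasDerivAt stdPdf (-(t * stdPdf t)) t := by
  have h : HasDerivAt (fun u : ℝ => -(1 / 2) * u ^ 2) (-t) t := by
    exact ((hasDerivAt_pow 2 t).const_mul (-(1 / 2) : ℝ)).congr_deriv (by ring)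
  simp only [stdPdf_eq_mul_exp]
  exact (h.exp.const_mul (√(2 * π))⁻¹).congr_deriv (by ring)

lemma tendsto_stdPdf_atBot : Tendsto stdPdf atBot (𝓝 0) := by
  have h : Tendsto (fun x : ℝ => -(1 / 2) * x ^ 2) atBot atBot := by
    simp_rw [sq]
    exact (tendsto_id.atBot_mul_atBot₀ tendsto_id).const_mul_atTop_of_neg (by norm_num)
  rw [stdPdf_eq_mul_exp, ← mul_zero (√(2 * π))⁻¹]
  exact (tendsto_exp_atBot.comp h).const_mul _

lemma integral_Iic_mul_stdPdf (x : ℝ) : ∫ t in Iic x, t * stdPdf t = -stdPdf x := by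
  have h := integral_Iic_of_hasDerivAt_of_tendsto (f := fun t => -stdPdf t)
    (f' := fun t => t * stdPdf t) (a := x) continuous_stdPdf.neg.continuousWithinAt
    (fun t _ => (hasDerivAt_stdPdf t).neg.congr_deriv (neg_neg _))
    integrable_mul_stdPdf.integrableOn tendsto_stdPdf_atBot.neg
  simpa using h

lemma setOf_stdCdf_le_eq (x y : ℝ) :
    {p : ℝ × ℝ | stdCdf p.1 ≤ stdCdf x ∧ stdCdf p.2 ≤ stdCdf y} = Iic x ×ˢ Iic y := by
  ext p
  simp only [mem_ofPred_eq, mem_prod, mem_Iic, stdCdf_strictMono.le_iff_le]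

noncomputable def bivScore (r : ℝ) (p : ℝ × ℝ) : ℝ :=
  (r + p.1 * p.2) / (1 - r ^ 2) - r * (p.1 ^ 2 + p.2 ^ 2 - 2 * r * p.1 * p.2) / (1 - r ^ 2) ^ 2

lemma hasDerivAt_bivPdf (p : ℝ × ℝ) {r : ℝ} (hr : r ^ 2 < 1) :
    HasDerivAt (fun r => bivPdf r p) (bivPdf r p * bivScore r p) r := by
  have hd : 0 < 1 - r ^ 2 := by linarith
  have h1r : HasDerivAt (fun r : ℝ => 1 - r ^ 2) (-(2 * r)) r := by
    simpa using (hasDerivAt_pow 2 r).const_sub 1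
  have hc : HasDerivAt (fun r : ℝ => (2 * π * √(1 - r ^ 2))⁻¹)
      ((2 * π * √(1 - r ^ 2))⁻¹ * (r / (1 - r ^ 2))) r := by
    refine (((h1r.sqrt hd.ne').const_mul (2 * π)).inv (by positivity)).congr_deriv ?_
    have hsq : √(1 - r ^ 2) ^ 2 = 1 - r ^ 2 := sq_sqrt hd.le
    have hS : √(1 - r ^ 2) ≠ 0 := by positivity
    field_simp
    rw [hsq]
  have hN : HasDerivAt (fun r : ℝ => -(p.1 ^ 2 + p.2 ^ 2 - 2 * r * p.1 * p.2))
      (2 * p.1 * p.2) r := by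
    have h := ((hasDerivAt_id' r).const_mul (2 * p.1 * p.2)).sub_const (p.1 ^ 2 + p.2 ^ 2)
    rw [mul_one] at h
    exact h.congr_of_eventuallyEq (.of_forall fun _ => by ring)
  have hE :
      HasDerivAt (fun r : ℝ => -(p.1 ^ 2 + p.2 ^ 2 - 2 * r * p.1 * p.2) / (2 * (1 - r ^ 2)))
      ((2 * p.1 * p.2 * (2 * (1 - r ^ 2)) - -(p.1 ^ 2 + p.2 ^ 2 - 2 * r * p.1 * p.2) *
        (2 * -(2 * r))) / (2 * (1 - r ^ 2)) ^ 2) r :=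
    hN.div (h1r.const_mul 2) (by positivity)
  refine (hc.mul hE.exp).congr_deriv ?_
  rw [bivPdf, bivScore]
  field_simp
  ring

lemma bivPdf_zero (p : ℝ × ℝ) : bivPdf 0 p = stdPdf p.1 * stdPdf p.2 := by
  have h2π : √(2 * π) * √(2 * π) = 2 * π := mul_self_sqrt (by positivity)
  rw [bivPdf, stdPdf, stdPdf, mul_mul_mul_comm, ← mul_inv, h2π, ← exp_add]
  norm_num
  ring_nf

lemma bivPdf_nonneg (r : ℝ) (p : ℝ × ℝ) : 0 ≤ bivPdf r p := by
  unfold bivPdf; positivity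

lemma continuous_bivPdf (r : ℝ) : Continuous (bivPdf r) := by
  unfold bivPdf; fun_prop

lemma bivScore_zero (p : ℝ × ℝ) : bivScore 0 p = p.1 * p.2 := by
  simp [bivScore]

lemma two_mul_abs_mul_le_add_sq (a b : ℝ) : 2 * |a * b| ≤ a ^ 2 + b ^ 2 := by
  simpa [abs_mul, mul_assoc] using two_mul_le_add_sq |a| |b|

lemma one_sub_sq_mem_Icc_of_abs_le {r : ℝ} (hr : |r| ≤ 1 / 2) :
    1 - r ^ 2 ∈ Icc (3 / 4) 1 := by
  constructor <;> nlinarith [sq_abs r, abs_nonneg r]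

lemma abs_two_mul_mul_mul_le {r : ℝ} (hr : |r| ≤ 1 / 2) (p : ℝ × ℝ) :
    |2 * r * p.1 * p.2| ≤ (p.1 ^ 2 + p.2 ^ 2) / 2 := by
  have := two_mul_abs_mul_le_add_sq p.1 p.2
  rw [mul_assoc, mul_assoc, abs_mul, abs_mul, abs_two]
  nlinarith [abs_nonneg (p.1 * p.2), abs_nonneg r]

lemma bivPdf_le_exp {r : ℝ} (hr : |r| ≤ 1 / 2) (p : ℝ × ℝ) :
    bivPdf r p ≤ exp (-(p.1 ^ 2 + p.2 ^ 2) / 4) := by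
  obtain ⟨hd, hd1⟩ := one_sub_sq_mem_Icc_of_abs_le hr
  have hS : 1 / 2 ≤ √(1 - r ^ 2) := by
    rw [le_sqrt (by norm_num) (by linarith)]; linarith
  have hc : (2 * π * √(1 - r ^ 2))⁻¹ ≤ 1 := inv_le_one_of_one_le₀ (by nlinarith [pi_gt_three])
  have hE : -(p.1 ^ 2 + p.2 ^ 2 - 2 * r * p.1 * p.2) / (2 * (1 - r ^ 2)) ≤
      -(p.1 ^ 2 + p.2 ^ 2) / 4 := by
    have := le_abs_self (2 * r * p.1 * p.2)
    have := abs_two_mul_mul_mul_le hr p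
    rw [div_le_div_iff₀ (by linarith) (by norm_num)]
    nlinarith [sq_nonneg p.1, sq_nonneg p.2]
  exact (mul_le_of_le_one_left (exp_pos _).le hc).trans (exp_le_exp.mpr hE)

lemma abs_bivScore_le {r : ℝ} (hr : |r| ≤ 1 / 2) (p : ℝ × ℝ) :
    |bivScore r p| ≤ 2 * (1 + (p.1 ^ 2 + p.2 ^ 2)) := by
  obtain ⟨hd, hd1⟩ := one_sub_sq_mem_Icc_of_abs_le hr
  have ht := two_mul_abs_mul_le_add_sq p.1 p.2
  have hrt := abs_two_mul_mul_mul_le hr p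
  have h1 : |(r + p.1 * p.2) / (1 - r ^ 2)| ≤ 2 / 3 * (1 + (p.1 ^ 2 + p.2 ^ 2)) := by
    rw [abs_div, abs_of_pos (show 0 < 1 - r ^ 2 by linarith), div_le_iff₀ (by linarith)]
    nlinarith [abs_add_le r (p.1 * p.2), abs_nonneg (p.1 * p.2)]
  have h2 : |r * (p.1 ^ 2 + p.2 ^ 2 - 2 * r * p.1 * p.2) / (1 - r ^ 2) ^ 2| ≤
      4 / 3 * (p.1 ^ 2 + p.2 ^ 2) := by
    have hd2 : 0 < (1 - r ^ 2) ^ 2 := pow_pos (by linarith) 2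
    rw [abs_div, abs_of_pos hd2, div_le_iff₀ hd2, abs_mul]
    have hX :
        |p.1 ^ 2 + p.2 ^ 2 - 2 * r * p.1 * p.2| ≤ 3 / 2 * (p.1 ^ 2 + p.2 ^ 2) := by
      rw [abs_le]; constructor <;> linarith [abs_le.mp hrt]
    have hd2' : 9 / 16 ≤ (1 - r ^ 2) ^ 2 := by nlinarith
    nlinarith [mul_le_mul hr hX (abs_nonneg _) (by norm_num), sq_nonneg p.1, sq_nonneg p.2]
  calc |bivScore r p| ≤ _ := abs_sub _ _
    _ ≤ _ := add_le_add h1 h2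
    _ ≤ _ := by nlinarith [sq_nonneg p.1, sq_nonneg p.2]

lemma abs_bivPdf_mul_bivScore_le {r : ℝ} (hr : |r| ≤ 1 / 2) (p : ℝ × ℝ) :
    |bivPdf r p * bivScore r p| ≤ 16 * (exp (-(1 / 8) * p.1 ^ 2) * exp (-(1 / 8) * p.2 ^ 2)) := by
  have hq : 1 + (p.1 ^ 2 + p.2 ^ 2) ≤ 8 * exp ((p.1 ^ 2 + p.2 ^ 2) / 8) := by
    linarith [add_one_le_exp ((p.1 ^ 2 + p.2 ^ 2) / 8)]
  calc |bivPdf r p * bivScore r p|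
      ≤ exp (-(p.1 ^ 2 + p.2 ^ 2) / 4) * (2 * (1 + (p.1 ^ 2 + p.2 ^ 2))) := by
        rw [abs_mul, abs_of_nonneg (bivPdf_nonneg r p)]
        exact mul_le_mul (bivPdf_le_exp hr p) (abs_bivScore_le hr p) (abs_nonneg _)
          (exp_pos _).le
    _ ≤ exp (-(p.1 ^ 2 + p.2 ^ 2) / 4) * (16 * exp ((p.1 ^ 2 + p.2 ^ 2) / 8)) :=
        mul_le_mul_of_nonneg_left (by linarith) (exp_pos _).le
    _ = _ := by
        rw [mul_left_comm, ← exp_add, ← exp_add]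
        ring_nf

lemma integrable_exp_neg_mul_sq_mul_exp_neg_mul_sq {b : ℝ} (hb : 0 < b) :
    Integrable fun p : ℝ × ℝ => exp (-b * p.1 ^ 2) * exp (-b * p.2 ^ 2) := by
  rw [Measure.volume_eq_prod]
  exact (integrable_exp_neg_mul_sq hb).mul_prod (integrable_exp_neg_mul_sq hb)

lemma hasDerivAt_setIntegral_bivPdf_zero (s : Set (ℝ × ℝ)) :
    HasDerivAt (fun r => ∫ p in s, bivPdf r p)
      (∫ p in s, p.1 * stdPdf p.1 * (p.2 * stdPdf p.2)) 0 := by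
  have hint : Integrable (bivPdf 0) := by
    simp_rw [funext bivPdf_zero, Measure.volume_eq_prod]
    exact integrable_stdPdf.mul_prod integrable_stdPdf
  have hball : ∀ r ∈ Metric.ball (0 : ℝ) (1 / 2), |r| ≤ 1 / 2 := fun r hr =>
    (mem_ball_zero_iff.mp hr).le
  have h := hasDerivAt_integral_of_dominated_loc_of_deriv_le (μ := volume.restrict s)
    (F' := fun r p => bivPdf r p * bivScore r p)
    (Metric.ball_mem_nhds 0 (by norm_num : (0 : ℝ) < 1 / 2))
    (.of_forall fun r => (continuous_bivPdf r).aestronglyMeasurable) hint.restrict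
    ((continuous_bivPdf 0).mul (by unfold bivScore; fun_prop)).aestronglyMeasurable
    (.of_forall fun p r hr => abs_bivPdf_mul_bivScore_le (hball r hr) p)
    ((integrable_exp_neg_mul_sq_mul_exp_neg_mul_sq
      (by norm_num : (0 : ℝ) < 1 / 8)).const_mul 16).restrict
    (.of_forall fun p r hr =>
      hasDerivAt_bivPdf p (by nlinarith [sq_abs r, abs_nonneg r, hball r hr]))
  refine h.2.congr_deriv (integral_congr_ae (.of_forall fun p => ?_))
  simp only [bivPdf_zero, bivScore_zero]
  ring

/-- The partial derivative of the Gaussian copula `C^r(u,v)` with respect to `r` at `r = 0`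
equals `φ(Φ⁻¹(u)) φ(Φ⁻¹(v))`; here `u = Φ(x)` and `v = Φ(y)` range over `(0,1)`. -/
theorem stmt_18 (x y : ℝ) :
    HasDerivAt (fun r => gaussCopula r (stdCdf x) (stdCdf y)) (stdPdf x * stdPdf y) 0 := by
  have hC : (fun r => gaussCopula r (stdCdf x) (stdCdf y)) =
      fun r => ∫ p in Iic x ×ˢ Iic y, bivPdf r p := by
    ext r; rw [gaussCopula, setOf_stdCdf_le_eq]
  have hval : ∫ p in Iic x ×ˢ Iic y, p.1 * stdPdf p.1 * (p.2 * stdPdf p.2) =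
      stdPdf x * stdPdf y := by
    rw [Measure.volume_eq_prod, ← Measure.prod_restrict,
      integral_prod_mul (fun t => t * stdPdf t) (fun t => t * stdPdf t),
      integral_Iic_mul_stdPdf, integral_Iic_mul_stdPdf, neg_mul_neg]
  rw [hC, ← hval]
  exact hasDerivAt_setIntegral_bivPdf_zero _
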